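/- arXiv:2303.10878 — 8 statements merged into one kernel-verified Lean document; each statement's English description precedes it below -/
import Mathlib

section
/- Let U be a uniformly convex Banach space and let Q ⊆ U be a nonempty bounded closed convex set. Let T : Q → Q be uniformly local asymptotic nonexpansive with radius r > 0 and coefficients (β_n). If there exists q₀ ∈ Q such that the asymptotic radius of the sequence (Tⁿq₀) relative to Q is strictly less than r, then T has a fixed point in Q. -/
open Filter

/-- The asymptotic radius of a sequence `x` relative to a set `Q`:
`inf { limsup_n ‖x n − y‖ : y ∈ Q }`. -/
noncomputable def asymptoticRadius {U : Type*} [NormedAddCommGroup U]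
    (Q : Set U) (x : ℕ → U) : ℝ :=
  sInf ((fun y => limsup (fun n => ‖x n - y‖) atTop) '' Q)

/-!
By uniform convexity, approximate minimisers on `Q` of `y ↦ limsup ‖Tⁿ q₀ - y‖` are close to
each other, so a minimising sequence converges to an asymptotic centre `z ∈ Q`. Since the
asymptotic radius `ρ` is below `r`, eventually `‖Tⁿ q₀ - z‖ < r`, and the local estimate gives
`limsup ‖Tⁿ⁺ᵐ q₀ - Tᵐ z‖ ≤ βₘ ρ`. As `βₘ → 1`, the points `Tᵐ z` are approximate centres, hence
`Tᵐ z → z`, and continuity of `T` at `z` gives `T z = z`.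
-/

open Bornology Metric Set Topology

theorem limsup_const_mul_of_nonneg {ι : Type*} {F : Filter ι} [F.NeBot] {c : ℝ} (hc : 0 ≤ c)
    {f : ι → ℝ} (hbdd : F.IsBoundedUnder (· ≤ ·) f) (hcobdd : F.IsCoboundedUnder (· ≤ ·) f) :
    limsup (fun i => c * f i) F = c * limsup f F :=
  (Monotone.map_limsSup_of_continuousAt (F := F.map f) (f := fun x => c * x)
    (fun _ _ h => by dsimp; gcongr) (continuous_const_mul c).continuousAt hbdd hcobdd).symm

section AsymptoticRadius

variable {U : Type*} [NormedAddCommGroup U] {Q : Set U} {x : ℕ → U} {y z : U}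

noncomputable def asymptoticRadiusAt (x : ℕ → U) (y : U) : ℝ :=
  limsup (fun n => ‖x n - y‖) atTop

theorem asymptoticRadius_eq_sInf :
    asymptoticRadius Q x = sInf (asymptoticRadiusAt x '' Q) :=
  rfl

theorem isBoundedUnder_norm_sub (hx : IsBounded (range x)) (y : U) :
    IsBoundedUnder (· ≤ ·) atTop (fun n => ‖x n - y‖) := by
  obtain ⟨C, hC⟩ := isBounded_iff_forall_norm_le.1 hx
  exact isBoundedUnder_of ⟨C + ‖y‖, fun n =>
    (norm_sub_le _ _).trans (by gcongr; exact hC _ (mem_range_self n))⟩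

theorem isCoboundedUnder_norm_sub (x : ℕ → U) (y : U) :
    IsCoboundedUnder (· ≤ ·) atTop (fun n => ‖x n - y‖) :=
  isCoboundedUnder_le_of_le atTop fun _ => norm_nonneg _

theorem asymptoticRadiusAt_nonneg (hx : IsBounded (range x)) (y : U) :
    0 ≤ asymptoticRadiusAt x y :=
  le_limsup_of_frequently_le (Frequently.of_forall fun _ => norm_nonneg _)
    (isBoundedUnder_norm_sub hx y)

theorem asymptoticRadius_le (hx : IsBounded (range x)) (hy : y ∈ Q) :
    asymptoticRadius Q x ≤ asymptoticRadiusAt x y :=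
  csInf_le ⟨0, forall_mem_image.2 fun y _ => asymptoticRadiusAt_nonneg hx y⟩
    (mem_image_of_mem _ hy)

theorem eventually_norm_sub_lt_of_asymptoticRadiusAt_lt (hx : IsBounded (range x)) {b : ℝ}
    (h : asymptoticRadiusAt x y < b) : ∀ᶠ n in atTop, ‖x n - y‖ < b :=
  eventually_lt_of_limsup_lt h (isBoundedUnder_norm_sub hx y)

theorem asymptoticRadiusAt_le_of_eventually_le {b : ℝ} (h : ∀ᶠ n in atTop, ‖x n - y‖ ≤ b) :
    asymptoticRadiusAt x y ≤ b :=
  limsup_le_of_le (isCoboundedUnder_norm_sub x y) h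

theorem lipschitzWith_asymptoticRadiusAt (hx : IsBounded (range x)) :
    LipschitzWith 1 (asymptoticRadiusAt x) := by
  refine LipschitzWith.of_le_add fun y z => ?_
  calc asymptoticRadiusAt x y ≤ limsup (fun n => ‖x n - z‖ + dist y z) atTop :=
        limsup_le_limsup (Eventually.of_forall fun n => by
            simpa only [dist_comm y z, dist_eq_norm] using norm_sub_le_norm_sub_add_norm_sub _ z _)
          (isCoboundedUnder_norm_sub x y)
          ((monotone_id.add_const _).isBoundedUnder_le_comp (isBoundedUnder_norm_sub hx z))
    _ = asymptoticRadiusAt x z + dist y z :=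
        limsup_add_const _ _ _ (isBoundedUnder_norm_sub hx z) (isCoboundedUnder_norm_sub x z)

theorem asymptoticRadiusAt_nat_add (x : ℕ → U) (m : ℕ) (y : U) :
    asymptoticRadiusAt (fun n => x (n + m)) y = asymptoticRadiusAt x y :=
  limsup_nat_add (fun n => ‖x n - y‖) m

theorem asymptoticRadiusAt_comp_le {S : U → U} {c r : ℝ} (hc : 0 ≤ c)
    (hS : ∀ p ∈ Q, ‖p - z‖ < r → ‖S p - S z‖ ≤ c * ‖p - z‖)
    (hx : IsBounded (range x)) (hxQ : ∀ n, x n ∈ Q) (hz : asymptoticRadiusAt x z < r) :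
    asymptoticRadiusAt (S ∘ x) (S z) ≤ c * asymptoticRadiusAt x z := by
  calc asymptoticRadiusAt (S ∘ x) (S z) ≤ limsup (fun n => c * ‖x n - z‖) atTop :=
        limsup_le_limsup ((eventually_norm_sub_lt_of_asymptoticRadiusAt_lt hx hz).mono
            fun n hn => hS _ (hxQ n) hn) (isCoboundedUnder_norm_sub _ _)
          ((monotone_mul_left_of_nonneg hc).isBoundedUnder_le_comp (isBoundedUnder_norm_sub hx z))
    _ = c * asymptoticRadiusAt x z :=
        limsup_const_mul_of_nonneg hc (isBoundedUnder_norm_sub hx z)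
          (isCoboundedUnder_norm_sub x z)

end AsymptoticRadius

section UniformConvex

variable {U : Type*} [NormedAddCommGroup U] [NormedSpace ℝ U] [UniformConvexSpace U]

theorem exists_forall_norm_add_le_two_sub_mul {d : ℝ} (hd : 0 < d) {D : ℝ} (hD : 0 < D) :
    ∃ δ > 0, ∀ R, 0 < R → R ≤ D → ∀ a b : U, ‖a‖ ≤ R → ‖b‖ ≤ R → d ≤ ‖a - b‖ →
      ‖a + b‖ ≤ (2 - δ) * R := by
  obtain ⟨δ, hδ, huc⟩ := exists_forall_closed_ball_dist_add_le_two_sub U (div_pos hd hD)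
  refine ⟨δ, hδ, fun R hR hRD a b ha hb hab => ?_⟩
  have hscale : ∀ v : U, ‖R⁻¹ • v‖ = ‖v‖ / R := fun v => by
    rw [norm_smul, norm_inv, Real.norm_of_nonneg hR.le, inv_mul_eq_div]
  have ha' : ‖R⁻¹ • a‖ ≤ 1 := by rwa [hscale, div_le_one hR]
  have hb' : ‖R⁻¹ • b‖ ≤ 1 := by rwa [hscale, div_le_one hR]
  have hab' : d / D ≤ ‖R⁻¹ • a - R⁻¹ • b‖ := by
    rw [← smul_sub, hscale]
    calc d / D ≤ d / R := div_le_div_of_nonneg_left hd.le hR hRD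
      _ ≤ ‖a - b‖ / R := by gcongr
  have := huc ha' hb' hab'
  rwa [← smul_add, hscale, div_le_iff₀ hR] at this

theorem exists_pos_forall_norm_add_le_two_mul_sub {d : ℝ} (hd : 0 < d) (ρ : ℝ) :
    ∃ ε > 0, ∀ a b : U, ‖a‖ ≤ ρ + ε → ‖b‖ ≤ ρ + ε → d ≤ ‖a - b‖ → ‖a + b‖ ≤ 2 * (ρ - ε) := by
  rcases le_or_gt ρ 0 with hρ | hρ
  · refine ⟨d / 4, by positivity, fun a b ha hb hab => absurd hab (not_le.2 ?_)⟩
    linarith [norm_sub_le a b]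
  obtain ⟨δ, hδ, huc⟩ :=
    exists_forall_norm_add_le_two_sub_mul (U := U) hd (D := ρ + 1) (by positivity)
  set ε := min 1 (ρ * δ / 4)
  have hε : 0 < ε := by positivity
  have hε₁ : ε ≤ 1 := min_le_left _ _
  have hεδ : ε ≤ ρ * δ / 4 := min_le_right _ _
  refine ⟨ε, hε, fun a b ha hb hab => ?_⟩
  calc ‖a + b‖ ≤ (2 - δ) * (ρ + ε) := huc _ (by positivity) (by linarith) a b ha hb hab
    _ ≤ 2 * (ρ - ε) := by nlinarith [mul_pos hδ hε]

variable {Q : Set U} {x : ℕ → U}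

theorem exists_pos_norm_sub_lt_of_asymptoticRadiusAt_lt (hx : IsBounded (range x))
    (hQ : Convex ℝ Q) {d : ℝ} (hd : 0 < d) :
    ∃ ε > 0, ∀ y ∈ Q, ∀ y' ∈ Q, asymptoticRadiusAt x y < asymptoticRadius Q x + ε →
      asymptoticRadiusAt x y' < asymptoticRadius Q x + ε → ‖y - y'‖ < d := by
  obtain ⟨ε, hε, huc⟩ :=
    exists_pos_forall_norm_add_le_two_mul_sub (U := U) hd (asymptoticRadius Q x)
  refine ⟨ε, hε, fun y hy y' hy' h h' => lt_of_not_ge fun hyy' => ?_⟩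
  -- otherwise uniform convexity pushes the midpoint of `y` and `y'` below the infimum
  have hm : (1 / 2 : ℝ) • y + (1 / 2 : ℝ) • y' ∈ Q :=
    hQ hy hy' (by norm_num) (by norm_num) (by norm_num)
  have hmid : asymptoticRadiusAt x ((1 / 2 : ℝ) • y + (1 / 2 : ℝ) • y') ≤
      asymptoticRadius Q x - ε := by
    refine asymptoticRadiusAt_le_of_eventually_le ?_
    filter_upwards [eventually_norm_sub_lt_of_asymptoticRadiusAt_lt hx h,
      eventually_norm_sub_lt_of_asymptoticRadiusAt_lt hx h'] with n hn hn'
    have hsep : d ≤ ‖(x n - y) - (x n - y')‖ := by rwa [sub_sub_sub_cancel_left, norm_sub_rev]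
    have hsum := huc _ _ hn.le hn'.le hsep
    have hsplit : x n - ((1 / 2 : ℝ) • y + (1 / 2 : ℝ) • y') =
        (1 / 2 : ℝ) • ((x n - y) + (x n - y')) := by module
    rw [hsplit, norm_smul, Real.norm_of_nonneg (by norm_num)]
    linarith
  linarith [asymptoticRadius_le hx hm]

theorem tendsto_norm_sub_of_tendsto_asymptoticRadiusAt {ι : Type*} {l : Filter ι} {u v : ι → U}
    (hx : IsBounded (range x)) (hQ : Convex ℝ Q) (huQ : ∀ i, u i ∈ Q) (hvQ : ∀ i, v i ∈ Q)
    (hu : Tendsto (fun i => asymptoticRadiusAt x (u i)) l (𝓝 (asymptoticRadius Q x)))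
    (hv : Tendsto (fun i => asymptoticRadiusAt x (v i)) l (𝓝 (asymptoticRadius Q x))) :
    Tendsto (fun i => ‖u i - v i‖) l (𝓝 0) := by
  refine tendsto_order.2 ⟨fun a ha => Eventually.of_forall fun i => ha.trans_le (norm_nonneg _),
    fun d hd => ?_⟩
  obtain ⟨ε, hε, hclose⟩ := exists_pos_norm_sub_lt_of_asymptoticRadiusAt_lt hx hQ hd
  filter_upwards [hu.eventually_lt_const (lt_add_of_pos_right _ hε),
    hv.eventually_lt_const (lt_add_of_pos_right _ hε)] with i hui hvi
  exact hclose _ (huQ i) _ (hvQ i) hui hvi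

theorem exists_asymptoticRadiusAt_eq_asymptoticRadius [CompleteSpace U]
    (hx : IsBounded (range x)) (hQne : Q.Nonempty) (hQcl : IsClosed Q) (hQ : Convex ℝ Q) :
    ∃ z ∈ Q, asymptoticRadiusAt x z = asymptoticRadius Q x := by
  obtain ⟨r, -, hr, hrmem⟩ := exists_seq_tendsto_sInf (hQne.image (asymptoticRadiusAt x))
    ⟨0, forall_mem_image.2 fun y _ => asymptoticRadiusAt_nonneg hx y⟩
  choose y hyQ hyr using hrmem
  have hy : Tendsto (fun n => asymptoticRadiusAt x (y n)) atTop (𝓝 (asymptoticRadius Q x)) := by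
    rw [asymptoticRadius_eq_sInf]
    exact hr.congr fun n => (hyr n).symm
  have hcauchy : CauchySeq y := by
    rw [cauchySeq_iff_tendsto_dist_atTop_0, ← prod_atTop_atTop_eq]
    simpa only [dist_eq_norm] using tendsto_norm_sub_of_tendsto_asymptoticRadiusAt
      (u := fun n : ℕ × ℕ => y n.1) (v := fun n => y n.2) hx hQ (fun n => hyQ n.1)
      (fun n => hyQ n.2) (hy.comp tendsto_fst) (hy.comp tendsto_snd)
  obtain ⟨z, hz⟩ := cauchySeq_tendsto_of_complete hcauchy
  refine ⟨z, hQcl.mem_of_tendsto hz (Eventually.of_forall hyQ), tendsto_nhds_unique ?_ hy⟩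
  exact ((lipschitzWith_asymptoticRadiusAt hx).continuous.tendsto z).comp hz

end UniformConvex

theorem asymptoticRadiusAt_iterate_le {U : Type*} [NormedAddCommGroup U] {Q : Set U}
    {T : U → U} {q z : U} {c r : ℝ} {m : ℕ} (hc : 0 ≤ c)
    (hTm : ∀ p ∈ Q, ‖p - z‖ < r → ‖T^[m] p - T^[m] z‖ ≤ c * ‖p - z‖)
    (hT : MapsTo T Q Q) (hq : q ∈ Q) (hQ : IsBounded Q)
    (hz : asymptoticRadiusAt (fun n => T^[n] q) z < r) :
    asymptoticRadiusAt (fun n => T^[n] q) (T^[m] z) ≤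
      c * asymptoticRadiusAt (fun n => T^[n] q) z := by
  have horbitQ : ∀ n, T^[n] q ∈ Q := fun n => hT.iterate n hq
  rw [← asymptoticRadiusAt_nat_add _ m]
  simp only [add_comm _ m, Function.iterate_add_apply]
  exact asymptoticRadiusAt_comp_le hc hTm (hQ.subset (range_subset_iff.2 horbitQ)) horbitQ hz

theorem continuousWithinAt_of_locally_lipschitz {α β : Type*} [PseudoMetricSpace α]
    [PseudoMetricSpace β] {f : α → β} {s : Set α} {x : α} {r : ℝ} (hr : 0 < r) (K : ℝ)
    (h : ∀ y ∈ s, dist y x < r → dist (f y) (f x) ≤ K * dist y x) :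
    ContinuousWithinAt f s x := by
  refine tendsto_iff_dist_tendsto_zero.2 (squeeze_zero' (g := fun y => K * dist y x)
    (Eventually.of_forall fun _ => dist_nonneg) ?_ ?_)
  · filter_upwards [self_mem_nhdsWithin, nhdsWithin_le_nhds (ball_mem_nhds x hr)] with y hy hyx
    exact h y hy hyx
  · exact (Continuous.tendsto' (by fun_prop) x 0 (by simp)).mono_left nhdsWithin_le_nhds

theorem fixed_point_of_uniformly_local_asymptotic_nonexpansive_general
    {U : Type*} [NormedAddCommGroup U] [NormedSpace ℝ U]
    [CompleteSpace U] [UniformConvexSpace U]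
    (Q : Set U) (hQbdd : Bornology.IsBounded Q)
    (hQcl : IsClosed Q) (hQconv : Convex ℝ Q)
    (T : U → U) (hT : Set.MapsTo T Q Q)
    (r : ℝ) (hr : 0 < r)
    (β : ℕ → ℝ) (hβpos : ∀ n, 0 < β n) (hβlim : Tendsto β atTop (nhds 1))
    (hTloc : ∀ p ∈ Q, ∀ q ∈ Q, ‖p - q‖ < r →
      ∀ n : ℕ, ‖T^[n] p - T^[n] q‖ ≤ β n * ‖p - q‖)
    (q₀ : U) (hq₀ : q₀ ∈ Q)
    (hrad : asymptoticRadius Q (fun n => T^[n] q₀) < r) :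
    ∃ w ∈ Q, T w = w := by
  set x : ℕ → U := fun n => T^[n] q₀
  have hx : IsBounded (range x) := hQbdd.subset (range_subset_iff.2 fun n => hT.iterate n hq₀)
  obtain ⟨z, hzQ, hz⟩ := exists_asymptoticRadiusAt_eq_asymptoticRadius hx ⟨q₀, hq₀⟩ hQcl hQconv
  have hiterQ : ∀ m, T^[m] z ∈ Q := fun m => hT.iterate m hzQ
  have horbit : Tendsto (fun m => asymptoticRadiusAt x (T^[m] z)) atTop
      (𝓝 (asymptoticRadius Q x)) := by
    refine tendsto_of_tendsto_of_tendsto_of_le_of_le tendsto_const_nhds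
      (by simpa only [one_mul] using hβlim.mul_const (asymptoticRadius Q x))
      (fun m => asymptoticRadius_le hx (hiterQ m)) (fun m => ?_)
    rw [← hz]
    exact asymptoticRadiusAt_iterate_le (hβpos m).le (fun p hp hpz => hTloc p hp z hzQ hpz m)
      hT hq₀ hQbdd (hz ▸ hrad)
  have hconv : Tendsto (fun m => T^[m] z) atTop (𝓝 z) :=
    tendsto_iff_norm_sub_tendsto_zero.2 <| tendsto_norm_sub_of_tendsto_asymptoticRadiusAt hx
      hQconv hiterQ (fun _ => hzQ) horbit (by rw [hz]; exact tendsto_const_nhds)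
  have hcont : ContinuousWithinAt T Q z :=
    continuousWithinAt_of_locally_lipschitz hr (β 1) fun p hp hpz => by
      simpa only [dist_eq_norm, Function.iterate_one] using hTloc p hp z hzQ
        (by rwa [dist_eq_norm] at hpz) 1
  have hstep : Tendsto (fun m => T (T^[m] z)) atTop (𝓝 z) := by
    simpa only [Function.comp_def, Function.iterate_succ_apply'] using
      hconv.comp (tendsto_add_atTop_nat 1)
  exact ⟨z, hzQ, tendsto_nhds_unique
    (hcont.tendsto.comp (tendsto_nhdsWithin_iff.2 ⟨hconv, Eventually.of_forall hiterQ⟩)) hstep⟩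

theorem fixed_point_of_uniformly_local_asymptotic_nonexpansive
    {U : Type*} [NormedAddCommGroup U] [NormedSpace ℝ U]
    [CompleteSpace U] [UniformConvexSpace U]
    (Q : Set U) (hQne : Q.Nonempty) (hQbdd : Bornology.IsBounded Q)
    (hQcl : IsClosed Q) (hQconv : Convex ℝ Q)
    (T : U → U) (hT : Set.MapsTo T Q Q)
    (r : ℝ) (hr : 0 < r)
    (β : ℕ → ℝ) (hβpos : ∀ n, 0 < β n) (hβlim : Tendsto β atTop (nhds 1))
    (hTloc : ∀ p ∈ Q, ∀ q ∈ Q, ‖p - q‖ < r →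
      ∀ n : ℕ, ‖T^[n] p - T^[n] q‖ ≤ β n * ‖p - q‖)
    (q₀ : U) (hq₀ : q₀ ∈ Q)
    (hrad : asymptoticRadius Q (fun n => T^[n] q₀) < r) :
    ∃ w ∈ Q, T w = w :=
  fixed_point_of_uniformly_local_asymptotic_nonexpansive_general Q hQbdd hQcl hQconv T hT r hr β
    hβpos hβlim hTloc q₀ hq₀ hrad
end

section
/- Let Q be a nonempty subset of a normed linear space U and let T : Q → Q be uniformly local asymptotic nonexpansive with radius r > 0 and coefficients (β_n). Suppose (q_n) is a sequence in Q such that ‖Tq_n − q_n‖ → 0 as n → ∞. Then for each fixed m ∈ ℕ, ‖T^m q_n − q_n‖ → 0 as n → ∞. -/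
open Filter Function Set Topology

section IterateApproxFixedPoint

variable {X : Type*} [PseudoMetricSpace X] {Q : Set X} {T : X → X} {r : ℝ} {β : ℕ → ℝ}

theorem dist_iterate_succ_self_le
    (hT : MapsTo T Q Q)
    (hloc : ∀ p ∈ Q, ∀ q ∈ Q, dist p q < r → ∀ n, dist (T^[n] p) (T^[n] q) ≤ β n * dist p q)
    {p : X} (hp : p ∈ Q) (hTp : dist (T p) p < r) (m : ℕ) :
    dist (T^[m + 1] p) p ≤ β m * dist (T p) p + dist (T^[m] p) p :=
  calc dist (T^[m + 1] p) p
      ≤ dist (T^[m] (T p)) (T^[m] p) + dist (T^[m] p) p := by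
        rw [iterate_succ_apply]; exact dist_triangle _ _ _
    _ ≤ β m * dist (T p) p + dist (T^[m] p) p := by
        gcongr; exact hloc _ (hT hp) _ hp hTp m

theorem tendsto_dist_iterate_self_of_tendsto_dist_self
    (hT : MapsTo T Q Q) (hr : 0 < r)
    (hloc : ∀ p ∈ Q, ∀ q ∈ Q, dist p q < r → ∀ n, dist (T^[n] p) (T^[n] q) ≤ β n * dist p q)
    {x : ℕ → X} (hx : ∀ n, x n ∈ Q)
    (hfix : Tendsto (fun n => dist (T (x n)) (x n)) atTop (𝓝 0)) (m : ℕ) :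
    Tendsto (fun n => dist (T^[m] (x n)) (x n)) atTop (𝓝 0) := by
  induction m with
  | zero => simp
  | succ m ih =>
    have hbound : ∀ᶠ n in atTop,
        dist (T^[m + 1] (x n)) (x n) ≤ β m * dist (T (x n)) (x n) + dist (T^[m] (x n)) (x n) := by
      filter_upwards [hfix.eventually (eventually_lt_nhds hr)] with n hn
      exact dist_iterate_succ_self_le hT hloc (hx n) hn m
    have hlim := (hfix.const_mul (β m)).add ih
    rw [mul_zero, add_zero] at hlim
    exact squeeze_zero' (Eventually.of_forall fun _ => dist_nonneg) hbound hlim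

end IterateApproxFixedPoint

theorem iterate_approx_fixed_point_seq_general
    {U : Type*} [NormedAddCommGroup U] [NormedSpace ℝ U]
    (Q : Set U)
    (T : U → U) (hT : Set.MapsTo T Q Q)
    (r : ℝ) (hr : 0 < r)
    (β : ℕ → ℝ)
    (hTloc : ∀ p ∈ Q, ∀ q ∈ Q, ‖p - q‖ < r →
      ∀ n : ℕ, ‖T^[n] p - T^[n] q‖ ≤ β n * ‖p - q‖)
    (q : ℕ → U) (hq : ∀ n, q n ∈ Q)
    (hfix : Tendsto (fun n => ‖T (q n) - q n‖) atTop (nhds 0)) :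
    ∀ m : ℕ, Tendsto (fun n => ‖T^[m] (q n) - q n‖) atTop (nhds 0) := by
  simp only [← dist_eq_norm] at hTloc hfix ⊢
  exact tendsto_dist_iterate_self_of_tendsto_dist_self hT hr hTloc hq hfix

theorem iterate_approx_fixed_point_seq
    {U : Type*} [NormedAddCommGroup U] [NormedSpace ℝ U]
    (Q : Set U) (hQne : Q.Nonempty)
    (T : U → U) (hT : Set.MapsTo T Q Q)
    (r : ℝ) (hr : 0 < r)
    (β : ℕ → ℝ) (hβpos : ∀ n, 0 < β n) (hβlim : Tendsto β atTop (nhds 1))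
    (hTloc : ∀ p ∈ Q, ∀ q ∈ Q, ‖p - q‖ < r →
      ∀ n : ℕ, ‖T^[n] p - T^[n] q‖ ≤ β n * ‖p - q‖)
    (q : ℕ → U) (hq : ∀ n, q n ∈ Q)
    (hfix : Tendsto (fun n => ‖T (q n) - q n‖) atTop (nhds 0)) :
    ∀ m : ℕ, Tendsto (fun n => ‖T^[m] (q n) - q n‖) atTop (nhds 0) :=
  iterate_approx_fixed_point_seq_general Q T hT r hr β hTloc q hq hfix
end

section
/- Let Q be a nonempty subset of a normed linear space, let T : Q → Q be uniformly local asymptotic nonexpansive with radius r > 0 and coefficients (β_n), and let q ∈ Q satisfy ‖Tq − q‖ < r. Then for every integer m ≥ 1, ‖T^m q − q‖ ≤ (1 + Σ_{j=1}^{m−1} β_j) ‖Tq − q‖. -/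
/-! Telescope `T^[m] q - q` along the orbit of `q`. The first step contributes `‖T q - q‖`; since
`T q` and `q` are within the radius `r`, the `k`-th step `‖T^[k] (T q) - T^[k] q‖` is at most
`β k * ‖T q - q‖`. -/

open Filter Finset

theorem Finset.sum_range_succ_eq_add_sum_Icc_one {M : Type*} [AddCommMonoid M] (f : ℕ → M)
    (n : ℕ) : ∑ k ∈ range (n + 1), f k = f 0 + ∑ k ∈ Icc 1 n, f k := by
  rw [Nat.range_succ_eq_Icc_zero, ← add_sum_Ioc_eq_sum_Icc n.zero_le]
  rfl

theorem norm_sub_le_range_sum_norm_sub {E : Type*} [SeminormedAddCommGroup E] (u : ℕ → E)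
    (n : ℕ) : ‖u n - u 0‖ ≤ ∑ k ∈ range n, ‖u (k + 1) - u k‖ := by
  simpa only [dist_eq_norm'] using dist_le_range_sum_dist u n

theorem iterate_dist_le_sum_coeffs_general
    {U : Type*} [NormedAddCommGroup U]
    (Q : Set U)
    (T : U → U) (hT : Set.MapsTo T Q Q)
    (r : ℝ)
    (β : ℕ → ℝ)
    (hTloc : ∀ p ∈ Q, ∀ q ∈ Q, ‖p - q‖ < r →
      ∀ n : ℕ, ‖T^[n] p - T^[n] q‖ ≤ β n * ‖p - q‖)
    (q : U) (hq : q ∈ Q) (hqr : ‖T q - q‖ < r) :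
    ∀ m : ℕ, 1 ≤ m →
      ‖T^[m] q - q‖ ≤ (1 + ∑ j ∈ Finset.Icc 1 (m - 1), β j) * ‖T q - q‖ := by
  rintro m hm
  obtain ⟨n, rfl⟩ : ∃ n, m = n + 1 := ⟨m - 1, by omega⟩
  have hstep (k : ℕ) : ‖T^[k + 1] q - T^[k] q‖ ≤ β k * ‖T q - q‖ := by
    simpa only [Function.iterate_succ_apply] using hTloc (T q) (hT hq) q hq hqr k
  calc ‖T^[n + 1] q - q‖ ≤ ∑ k ∈ range (n + 1), ‖T^[k + 1] q - T^[k] q‖ :=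
        norm_sub_le_range_sum_norm_sub (fun k ↦ T^[k] q) (n + 1)
    _ ≤ ‖T q - q‖ + ∑ k ∈ Icc 1 n, β k * ‖T q - q‖ := by
        rw [sum_range_succ_eq_add_sum_Icc_one]
        gcongr with k
        · simp
        · exact hstep k
    _ = (1 + ∑ j ∈ Icc 1 (n + 1 - 1), β j) * ‖T q - q‖ := by
        rw [Nat.add_sub_cancel, ← sum_mul]
        ring

theorem iterate_dist_le_sum_coeffs
    {U : Type*} [NormedAddCommGroup U] [NormedSpace ℝ U]
    (Q : Set U) (hQne : Q.Nonempty)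
    (T : U → U) (hT : Set.MapsTo T Q Q)
    (r : ℝ) (hr : 0 < r)
    (β : ℕ → ℝ) (hβpos : ∀ n, 0 < β n) (hβlim : Tendsto β atTop (nhds 1))
    (hTloc : ∀ p ∈ Q, ∀ q ∈ Q, ‖p - q‖ < r →
      ∀ n : ℕ, ‖T^[n] p - T^[n] q‖ ≤ β n * ‖p - q‖)
    (q : U) (hq : q ∈ Q) (hqr : ‖T q - q‖ < r) :
    ∀ m : ℕ, 1 ≤ m →
      ‖T^[m] q - q‖ ≤ (1 + ∑ j ∈ Finset.Icc 1 (m - 1), β j) * ‖T q - q‖ :=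
  iterate_dist_le_sum_coeffs_general Q T hT r β hTloc q hq hqr
end

section
/- Let Q be a nonempty subset of a normed linear space, let T : Q → Q be uniformly local asymptotic nonexpansive with radius r > 0 and coefficients (β_n), and let (q_n) be a bounded sequence in Q with ‖q_n − Tq_n‖ → 0. Then for every q ∈ Q and every m ∈ ℕ, limsup_{n→∞} ‖T^m q_n − q‖ = limsup_{n→∞} ‖q_n − q‖. -/
/-!
Along an approximate fixed-point sequence, `d(T^{m+1} q_n, q_n) ≤ β_m d(T q_n, q_n) + d(T^m q_n, q_n)`
as soon as `d(T q_n, q_n) < r`, so by induction `d(T^m q_n, q_n) → 0` for every `m`. Hence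
`d(T^m q_n, x)` and `d(q_n, x)` differ by a null sequence, and such sequences have the same
limsup once they are bounded.
-/

open Filter Topology

theorem Filter.limsup_add_of_tendsto_zero {ι : Type*} {f : Filter ι} [f.NeBot] {u v : ι → ℝ}
    (hu_le : IsBoundedUnder (· ≤ ·) f u) (hu_ge : IsBoundedUnder (· ≥ ·) f u)
    (hv : Tendsto v f (𝓝 0)) :
    limsup (u + v) f = limsup u f := by
  apply le_antisymm
  · calc limsup (u + v) f ≤ limsup u f + limsup v f :=
          limsup_add_le hu_ge hu_le hv.isCoboundedUnder_le hv.isBoundedUnder_le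
      _ = limsup u f := by rw [hv.limsup_eq, add_zero]
  · calc limsup u f = limsup u f + liminf v f := by rw [hv.liminf_eq, add_zero]
      _ ≤ limsup (u + v) f := le_limsup_add hu_le hu_ge.isCoboundedUnder_le
          hv.isBoundedUnder_le hv.isBoundedUnder_ge

theorem Filter.limsup_dist_eq_of_tendsto_dist {ι X : Type*} [PseudoMetricSpace X]
    {f : Filter ι} [f.NeBot] {a b : ι → X} (hb : Bornology.IsBounded (Set.range b))
    (hab : Tendsto (fun i => dist (a i) (b i)) f (𝓝 0)) (x : X) :
    limsup (fun i => dist (a i) x) f = limsup (fun i => dist (b i) x) f := by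
  obtain ⟨C, hC⟩ := (Metric.isBounded_iff_subset_closedBall x).1 hb
  have hdiff : Tendsto (fun i => dist (a i) x - dist (b i) x) f (𝓝 0) :=
    squeeze_zero_norm (fun i => abs_dist_sub_le _ _ _) hab
  have hb_le : IsBoundedUnder (· ≤ ·) f (fun i => dist (b i) x) :=
    isBoundedUnder_of ⟨C, fun i => hC ⟨i, rfl⟩⟩
  have hb_ge : IsBoundedUnder (· ≥ ·) f (fun i => dist (b i) x) :=
    isBoundedUnder_of ⟨0, fun i => dist_nonneg⟩
  convert limsup_add_of_tendsto_zero hb_le hb_ge hdiff using 2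
  ext i
  simp

theorem tendsto_dist_iterate_self {ι X : Type*} [PseudoMetricSpace X] {Q : Set X} {T : X → X}
    (hT : Set.MapsTo T Q Q) {r : ℝ} (hr : 0 < r) {β : ℕ → ℝ}
    (hTloc : ∀ p ∈ Q, ∀ q ∈ Q, dist p q < r → ∀ n, dist (T^[n] p) (T^[n] q) ≤ β n * dist p q)
    {f : Filter ι} {q : ι → X} (hqQ : ∀ i, q i ∈ Q)
    (hfix : Tendsto (fun i => dist (T (q i)) (q i)) f (𝓝 0)) (m : ℕ) :
    Tendsto (fun i => dist (T^[m] (q i)) (q i)) f (𝓝 0) := by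
  induction m with
  | zero => simpa using tendsto_const_nhds
  | succ m ih =>
    have hstep : ∀ᶠ i in f,
        dist (T^[m + 1] (q i)) (q i) ≤ β m * dist (T (q i)) (q i) + dist (T^[m] (q i)) (q i) := by
      filter_upwards [hfix.eventually (eventually_lt_nhds hr)] with i hi
      rw [Function.iterate_succ_apply]
      exact (dist_triangle _ (T^[m] (q i)) _).trans
        (add_le_add_left (hTloc _ (hT (hqQ i)) _ (hqQ i) hi m) _)
    refine squeeze_zero' (Eventually.of_forall fun _ => dist_nonneg) hstep ?_
    simpa using (hfix.const_mul (β m)).add ih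

theorem limsup_iterate_eq_limsup_general
    {U : Type*} [NormedAddCommGroup U] [NormedSpace ℝ U]
    (Q : Set U)
    (T : U → U) (hT : Set.MapsTo T Q Q)
    (r : ℝ) (hr : 0 < r)
    (β : ℕ → ℝ)
    (hTloc : ∀ p ∈ Q, ∀ q ∈ Q, ‖p - q‖ < r →
      ∀ n : ℕ, ‖T^[n] p - T^[n] q‖ ≤ β n * ‖p - q‖)
    (q : ℕ → U) (hqQ : ∀ n, q n ∈ Q)
    (hqbdd : Bornology.IsBounded (Set.range q))
    (hfix : Tendsto (fun n => ‖q n - T (q n)‖) atTop (nhds 0)) :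
    ∀ x ∈ Q, ∀ m : ℕ,
      limsup (fun n => ‖T^[m] (q n) - x‖) atTop = limsup (fun n => ‖q n - x‖) atTop := by
  intro x _ m
  simp only [← dist_eq_norm] at hTloc hfix ⊢
  rw [funext fun n => dist_comm (q n) (T (q n))] at hfix
  exact limsup_dist_eq_of_tendsto_dist hqbdd
    (tendsto_dist_iterate_self hT hr hTloc hqQ hfix m) x

theorem limsup_iterate_eq_limsup
    {U : Type*} [NormedAddCommGroup U] [NormedSpace ℝ U]
    (Q : Set U) (hQne : Q.Nonempty)
    (T : U → U) (hT : Set.MapsTo T Q Q)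
    (r : ℝ) (hr : 0 < r)
    (β : ℕ → ℝ) (hβpos : ∀ n, 0 < β n) (hβlim : Tendsto β atTop (nhds 1))
    (hTloc : ∀ p ∈ Q, ∀ q ∈ Q, ‖p - q‖ < r →
      ∀ n : ℕ, ‖T^[n] p - T^[n] q‖ ≤ β n * ‖p - q‖)
    (q : ℕ → U) (hqQ : ∀ n, q n ∈ Q)
    (hqbdd : Bornology.IsBounded (Set.range q))
    (hfix : Tendsto (fun n => ‖q n - T (q n)‖) atTop (nhds 0)) :
    ∀ x ∈ Q, ∀ m : ℕ,
      limsup (fun n => ‖T^[m] (q n) - x‖) atTop = limsup (fun n => ‖q n - x‖) atTop :=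
  limsup_iterate_eq_limsup_general Q T hT r hr β hTloc q hqQ hqbdd hfix
end

section
/- Let U be a uniformly convex Banach space, Q ⊆ U a nonempty bounded closed convex set, and T : Q → Q uniformly local asymptotic nonexpansive with radius r > 0 and coefficients (β_n). Suppose there exists q₀ ∈ Q such that the asymptotic radius of (Tⁿq₀) relative to Q is strictly less than r, and let w ∈ Q be a minimizer over Q of the function f(q) = limsup_{n→∞} ‖Tⁿq₀ − q‖. Then the sequence (Tⁿw) is a Cauchy sequence. -/
/-!
Write `xₙ = Tⁿq₀` and `ρ = limsup ‖xₙ - w‖`, the asymptotic radius. Since `ρ < r`, eventually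
`‖xₙ - w‖ < r`, so local nonexpansiveness gives `limsup_n ‖xₙ - Tᵐw‖ ≤ βₘ ρ → ρ`: the iterates
`Tᵐw` are asymptotically almost optimal points of `Q`. In a uniformly convex space two almost
optimal points of a convex set are close, since otherwise their midpoint would beat the optimum
`ρ`; hence `‖Tᵐw - Tᵏw‖` is small for large `m, k`.
-/

open Filter

open Set Bornology Topology

section UniformConvexity

variable {E : Type*} [NormedAddCommGroup E] [NormedSpace ℝ E] [UniformConvexSpace E]

lemma exists_forall_norm_add_le_two_sub_mul_s7 {ε : ℝ} (hε : 0 < ε) :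
    ∃ δ > 0, ∀ (R : ℝ) ⦃x y : E⦄, ‖x‖ ≤ R → ‖y‖ ≤ R → ε * R ≤ ‖x - y‖ →
      ‖x + y‖ ≤ (2 - δ) * R := by
  obtain ⟨δ, hδ, hunit⟩ := exists_forall_closed_ball_dist_add_le_two_sub E hε
  refine ⟨δ, hδ, fun R x y hx hy hxy => ?_⟩
  rcases ((norm_nonneg x).trans hx).eq_or_lt with rfl | hR
  · simp [norm_le_zero_iff.1 hx, norm_le_zero_iff.1 hy]
  have hscale : ∀ z : E, ‖R⁻¹ • z‖ = ‖z‖ / R := fun z => by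
    rw [norm_smul, norm_inv, Real.norm_of_nonneg hR.le, inv_mul_eq_div]
  have key := hunit (x := R⁻¹ • x) (y := R⁻¹ • y)
    (by rw [hscale]; exact div_le_one_of_le₀ hx hR.le)
    (by rw [hscale]; exact div_le_one_of_le₀ hy hR.le)
    (by rw [← smul_sub, hscale, le_div_iff₀ hR]; exact hxy)
  rw [← smul_add, hscale, div_le_iff₀ hR] at key
  exact key

end UniformConvexity

section LimsupNorm

variable {U : Type*} [NormedAddCommGroup U]

lemma isBoundedUnder_norm_sub_of_isBounded_range {x : ℕ → U} (hx : IsBounded (range x))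
    (y : U) :
    IsBoundedUnder (· ≤ ·) atTop fun n => ‖x n - y‖ := by
  obtain ⟨C, hC⟩ := hx.exists_norm_le
  exact isBoundedUnder_of ⟨C + ‖y‖, fun n =>
    (norm_sub_le _ _).trans (by gcongr; exact hC _ (mem_range_self n))⟩

lemma limsup_le_mul_limsup_of_eventually_le {u v : ℕ → ℝ} {c : ℝ} (hc : 0 ≤ c)
    (hu : ∀ n, 0 ≤ u n) (hv : ∀ n, 0 ≤ v n) (hv_bdd : IsBoundedUnder (· ≤ ·) atTop v)
    (huv : ∀ᶠ n in atTop, u n ≤ c * v n) :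
    limsup u atTop ≤ c * limsup v atTop := by
  have hcv_bdd : IsBoundedUnder (· ≤ ·) atTop fun n => c * v n := by
    obtain ⟨C, hC⟩ := hv_bdd
    exact ⟨c * C, hC.mono fun n hn => mul_le_mul_of_nonneg_left hn hc⟩
  calc limsup u atTop ≤ limsup (fun n => c * v n) atTop :=
        limsup_le_limsup huv (isCoboundedUnder_le_of_le atTop hu) hcv_bdd
    _ = c * limsup v atTop :=
        ((monotone_mul_left_of_nonneg hc).map_limsup_of_continuousAt v
          (continuous_const_mul c).continuousAt hv_bdd
          (isCoboundedUnder_le_of_le atTop hv)).symm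

lemma norm_sub_lt_of_limsup_lt {x : ℕ → U} (hx : IsBounded (range x)) {a b : U} {R R' : ℝ}
    (ha : limsup (fun n => ‖x n - a‖) atTop < R)
    (hb : limsup (fun n => ‖x n - b‖) atTop < R') :
    ‖a - b‖ < R + R' := by
  obtain ⟨n, hna, hnb⟩ :=
    ((eventually_lt_of_limsup_lt ha (isBoundedUnder_norm_sub_of_isBounded_range hx a)).and
      (eventually_lt_of_limsup_lt hb (isBoundedUnder_norm_sub_of_isBounded_range hx b))).exists
  calc ‖a - b‖ ≤ ‖a - x n‖ + ‖x n - b‖ := norm_sub_le_norm_sub_add_norm_sub a (x n) b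
    _ < R + R' := by rw [norm_sub_rev a]; exact add_lt_add hna hnb

lemma asymptoticRadius_eq_of_isMinOn {Q : Set U} {x : ℕ → U} {w : U} (hw : w ∈ Q)
    (hmin : IsMinOn (fun y => limsup (fun n => ‖x n - y‖) atTop) Q w) :
    asymptoticRadius Q x = limsup (fun n => ‖x n - w‖) atTop :=
  IsLeast.csInf_eq ⟨mem_image_of_mem _ hw, forall_mem_image.2 (isMinOn_iff.1 hmin)⟩

end LimsupNorm

section AsymptoticCenter

variable {U : Type*} [NormedAddCommGroup U] [NormedSpace ℝ U] [UniformConvexSpace U]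

lemma exists_pos_limsup_norm_sub_midpoint_le {ε : ℝ} (hε : 0 < ε) :
    ∃ δ > 0, ∀ ⦃x : ℕ → U⦄, IsBounded (range x) → ∀ ⦃R : ℝ⦄ ⦃a b : U⦄,
      limsup (fun n => ‖x n - a‖) atTop < R → limsup (fun n => ‖x n - b‖) atTop < R →
      ε * R ≤ ‖a - b‖ → limsup (fun n => ‖x n - midpoint ℝ a b‖) atTop ≤ (1 - δ / 2) * R := by
  obtain ⟨δ, hδ, huc⟩ := exists_forall_norm_add_le_two_sub_mul_s7 (E := U) hε
  refine ⟨δ, hδ, fun x hx R a b ha hb hab =>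
    limsup_le_of_le (isCoboundedUnder_le_of_le atTop fun _ => norm_nonneg _) ?_⟩
  filter_upwards
    [eventually_lt_of_limsup_lt ha (isBoundedUnder_norm_sub_of_isBounded_range hx a),
      eventually_lt_of_limsup_lt hb (isBoundedUnder_norm_sub_of_isBounded_range hx b)]
    with n hna hnb
  have hsum := huc R hna.le hnb.le (by rwa [sub_sub_sub_cancel_left, norm_sub_rev])
  have hmid : x n - midpoint ℝ a b = (2⁻¹ : ℝ) • ((x n - a) + (x n - b)) := by
    rw [midpoint_eq_smul_add, invOf_eq_inv]
    module
  rw [hmid, norm_smul, Real.norm_of_nonneg (by norm_num)]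
  linarith

theorem Convex.exists_pos_forall_norm_sub_lt_of_limsup_lt {Q : Set U} (hQ : Convex ℝ Q)
    {x : ℕ → U} (hx : IsBounded (range x)) {ρ : ℝ}
    (hρ : ∀ z ∈ Q, ρ ≤ limsup (fun n => ‖x n - z‖) atTop) {ε : ℝ} (hε : 0 < ε) :
    ∃ η > 0, ∀ a ∈ Q, ∀ b ∈ Q, limsup (fun n => ‖x n - a‖) atTop < ρ + η →
      limsup (fun n => ‖x n - b‖) atTop < ρ + η → ‖a - b‖ < ε := by
  rcases le_or_gt ρ 0 with hρ0 | hρ0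
  · refine ⟨ε / 2, half_pos hε, fun a _ b _ ha hb => ?_⟩
    linarith [norm_sub_lt_of_limsup_lt hx ha hb]
  obtain ⟨δ, hδ, hmid⟩ :=
    exists_pos_limsup_norm_sub_midpoint_le (U := U) (div_pos hε (by linarith : 0 < ρ + 1))
  set η := min 1 (δ * ρ / 4)
  have hη : 0 < η := lt_min one_pos (by positivity)
  refine ⟨η, hη, fun a haQ b hbQ ha hb => ?_⟩
  by_contra! hab
  have hscale : ε / (ρ + 1) * (ρ + η) ≤ ‖a - b‖ := by
    refine le_trans ?_ hab
    rw [div_mul_eq_mul_div, div_le_iff₀ (by linarith)]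
    gcongr
    exact min_le_left _ _
  have hbetter := (hρ _ (hQ.midpoint_mem haQ hbQ)).trans (hmid hx ha hb hscale)
  -- the midpoint beats the optimum, as `η ≤ δρ/4 < δ(ρ + η)/2`
  nlinarith [min_le_right 1 (δ * ρ / 4), mul_pos hδ hη]

end AsymptoticCenter

section Iterates

variable {U : Type*} [NormedAddCommGroup U]

lemma limsup_norm_iterate_sub_iterate_le {Q : Set U} (hQ : IsBounded Q) {T : U → U}
    (hT : MapsTo T Q Q) {p w : U} (hp : p ∈ Q) {r c : ℝ} (hc : 0 ≤ c) {m : ℕ}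
    (hTm : ∀ q ∈ Q, ‖q - w‖ < r → ‖T^[m] q - T^[m] w‖ ≤ c * ‖q - w‖)
    (hr : limsup (fun n => ‖T^[n] p - w‖) atTop < r) :
    limsup (fun n => ‖T^[n] p - T^[m] w‖) atTop ≤
      c * limsup (fun n => ‖T^[n] p - w‖) atTop := by
  have horbit : IsBounded (range fun n => T^[n] p) :=
    hQ.subset (range_subset_iff.2 fun n => hT.iterate n hp)
  have hbdd := isBoundedUnder_norm_sub_of_isBounded_range horbit w
  rw [← limsup_nat_add _ m]
  refine limsup_le_mul_limsup_of_eventually_le hc (fun _ => norm_nonneg _)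
    (fun _ => norm_nonneg _) hbdd ?_
  filter_upwards [eventually_lt_of_limsup_lt hr hbdd] with n hn
  rw [add_comm, Function.iterate_add_apply]
  exact hTm _ (hT.iterate n hp) hn

end Iterates

theorem iterate_cauchySeq_of_minimizer_general
    {U : Type*} [NormedAddCommGroup U] [NormedSpace ℝ U]
    [UniformConvexSpace U]
    (Q : Set U) (hQbdd : Bornology.IsBounded Q)
    (hQconv : Convex ℝ Q)
    (T : U → U) (hT : Set.MapsTo T Q Q)
    (r : ℝ)
    (β : ℕ → ℝ) (hβpos : ∀ n, 0 < β n) (hβlim : Tendsto β atTop (nhds 1))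
    (hTloc : ∀ p ∈ Q, ∀ q ∈ Q, ‖p - q‖ < r →
      ∀ n : ℕ, ‖T^[n] p - T^[n] q‖ ≤ β n * ‖p - q‖)
    (q₀ : U) (hq₀ : q₀ ∈ Q)
    (hrad : asymptoticRadius Q (fun n => T^[n] q₀) < r)
    (w : U) (hw : w ∈ Q)
    (hwmin : ∀ q ∈ Q, limsup (fun n => ‖T^[n] q₀ - w‖) atTop ≤
      limsup (fun n => ‖T^[n] q₀ - q‖) atTop) :
    CauchySeq (fun n => T^[n] w) := by
  set ρ := limsup (fun n => ‖T^[n] q₀ - w‖) atTop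
  have horbit : IsBounded (range fun n => T^[n] q₀) :=
    hQbdd.subset (range_subset_iff.2 fun n => hT.iterate n hq₀)
  have hρr : ρ < r :=
    (asymptoticRadius_eq_of_isMinOn hw (isMinOn_iff.2 hwmin)).symm.trans_lt hrad
  have hstep : ∀ m, limsup (fun n => ‖T^[n] q₀ - T^[m] w‖) atTop ≤ β m * ρ := fun m =>
    limsup_norm_iterate_sub_iterate_le hQbdd hT hq₀ (hβpos m).le
      (fun q hq hqw => hTloc q hq w hw hqw m) hρr
  rw [Metric.cauchySeq_iff]
  intro ε hε
  obtain ⟨η, hη, hclose⟩ := hQconv.exists_pos_forall_norm_sub_lt_of_limsup_lt horbit hwmin hε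
  have hβρ : Tendsto (fun m => β m * ρ) atTop (𝓝 ρ) := by simpa using hβlim.mul_const ρ
  obtain ⟨N, hN⟩ := eventually_atTop.1 (hβρ.eventually_lt_const (lt_add_of_pos_right ρ hη))
  refine ⟨N, fun m hm k hk => ?_⟩
  rw [dist_eq_norm]
  exact hclose _ (hT.iterate m hw) _ (hT.iterate k hw)
    ((hstep m).trans_lt (hN m hm)) ((hstep k).trans_lt (hN k hk))

theorem iterate_cauchySeq_of_minimizer
    {U : Type*} [NormedAddCommGroup U] [NormedSpace ℝ U]
    [CompleteSpace U] [UniformConvexSpace U]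
    (Q : Set U) (hQne : Q.Nonempty) (hQbdd : Bornology.IsBounded Q)
    (hQcl : IsClosed Q) (hQconv : Convex ℝ Q)
    (T : U → U) (hT : Set.MapsTo T Q Q)
    (r : ℝ) (hr : 0 < r)
    (β : ℕ → ℝ) (hβpos : ∀ n, 0 < β n) (hβlim : Tendsto β atTop (nhds 1))
    (hTloc : ∀ p ∈ Q, ∀ q ∈ Q, ‖p - q‖ < r →
      ∀ n : ℕ, ‖T^[n] p - T^[n] q‖ ≤ β n * ‖p - q‖)
    (q₀ : U) (hq₀ : q₀ ∈ Q)
    (hrad : asymptoticRadius Q (fun n => T^[n] q₀) < r)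
    (w : U) (hw : w ∈ Q)
    (hwmin : ∀ q ∈ Q, limsup (fun n => ‖T^[n] q₀ - w‖) atTop ≤
      limsup (fun n => ‖T^[n] q₀ - q‖) atTop) :
    CauchySeq (fun n => T^[n] w) :=
  iterate_cauchySeq_of_minimizer_general Q hQbdd hQconv T hT r β hβpos hβlim hTloc q₀ hq₀ hrad w hw
    hwmin
end

section
/- Let Q be a nonempty weakly compact convex subset of a Banach space U and let T : Q → Q be a uniformly asymptotic local contraction with radius r > 0, coefficients (β_n) and limit β ∈ [0, 1). If there exists q₀ ∈ Q such that the asymptotic radius of the sequence (Tⁿq₀) relative to Q is strictly less than r, then T has a unique fixed point in Q. -/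
open Filter

/-!
Splitting a segment of a convex set into pieces shorter than `r` shows that a uniformly
asymptotic local contraction satisfies its estimate globally on `Q`. Choosing `k` with
`β_k < 1`, the iterate `Tᵏ` is then a contraction of the closed (hence complete) set `Q`, so it
has a unique fixed point by Banach's theorem, and this point is also the unique fixed point
of `T`, which commutes with `Tᵏ`.
-/

open Set NNReal

theorem Convex.lipschitzOnWith_of_dist_lt {E F : Type*} [NormedAddCommGroup E]
    [NormedSpace ℝ E] [PseudoMetricSpace F] {s : Set E} (hs : Convex ℝ s) {f : E → F}
    {K : ℝ≥0} {r : ℝ} (hr : 0 < r)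
    (hf : ∀ x ∈ s, ∀ y ∈ s, dist x y < r → dist (f x) (f y) ≤ K * dist x y) :
    LipschitzOnWith K f s := by
  refine LipschitzOnWith.of_dist_le_mul fun x hx y hy => ?_
  obtain ⟨m, hm⟩ := exists_nat_gt (dist x y / r)
  have hm0 : (0 : ℝ) < m := (div_nonneg dist_nonneg hr.le).trans_lt hm
  set u : ℕ → E := fun i => AffineMap.lineMap x y ((i : ℝ) / m)
  have hu_mem : ∀ i ≤ m, u i ∈ s := fun i hi =>
    hs.lineMap_mem hx hy ⟨by positivity, div_le_one_of_le₀ (by exact_mod_cast hi) hm0.le⟩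
  have hu_dist : ∀ i, dist (u i) (u (i + 1)) = dist x y / m := by
    intro i
    rw [dist_lineMap_lineMap, Real.dist_eq, Nat.cast_succ,
      show (i : ℝ) / m - (i + 1) / m = -(1 / m) by ring, abs_neg, abs_of_pos (by positivity)]
    ring
  have hu_lt : dist x y / m < r := by rwa [div_lt_iff₀ hm0, mul_comm, ← div_lt_iff₀ hr]
  calc dist (f x) (f y) = dist (f (u 0)) (f (u m)) := by simp [u, hm0.ne']
    _ ≤ ∑ i ∈ Finset.range m, dist (f (u i)) (f (u (i + 1))) :=
      dist_le_range_sum_dist (fun i => f (u i)) m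
    _ ≤ ∑ _i ∈ Finset.range m, K * (dist x y / m) := by
      refine Finset.sum_le_sum fun i hi => ?_
      have hi := Finset.mem_range.1 hi
      rw [← hu_dist i]
      exact hf _ (hu_mem i hi.le) _ (hu_mem (i + 1) hi) (hu_dist i ▸ hu_lt)
    _ = K * dist x y := by
      rw [Finset.sum_const, Finset.card_range, nsmul_eq_mul]
      field_simp

theorem LipschitzOnWith.existsUnique_fixedPt_of_lt_one {α : Type*} [MetricSpace α]
    {f : α → α} {s : Set α} {K : ℝ≥0} (hsc : IsComplete s) (hs : s.Nonempty)
    (hsf : MapsTo f s s) (hf : LipschitzOnWith K f s) (hK : K < 1) :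
    ∃! x, x ∈ s ∧ f x = x := by
  obtain ⟨x₀, hx₀⟩ := hs
  obtain ⟨x, hx, hfx, -⟩ :=
    ContractingWith.exists_fixedPoint' (K := K) hsc hsf ⟨hK, hf.mapsToRestrict hsf⟩ hx₀
      (edist_ne_top _ _)
  refine ⟨x, ⟨hx, hfx⟩, fun y ⟨hy, hfy⟩ => dist_le_zero.1 ?_⟩
  have hle : dist y x ≤ K * dist y x := by
    simpa only [hfy, hfx.eq] using hf.dist_le_mul y hy x hx
  nlinarith [dist_nonneg (x := y) (y := x), show (K : ℝ) < 1 from hK]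

theorem existsUnique_fixedPt_of_iterate {α : Type*} {f : α → α} {s : Set α}
    (hsf : MapsTo f s s) {k : ℕ} (h : ∃! x, x ∈ s ∧ f^[k] x = x) :
    ∃! x, x ∈ s ∧ f x = x := by
  obtain ⟨x, ⟨hx, hkx⟩, huniq⟩ := h
  have hfx : f x = x :=
    huniq (f x) ⟨hsf hx, by rw [← Function.iterate_succ_apply, Function.iterate_succ_apply', hkx]⟩
  exact ⟨x, ⟨hx, hfx⟩, fun y ⟨hy, hfy⟩ => huniq y ⟨hy, Function.iterate_fixed hfy k⟩⟩

theorem IsCompact.isClosed_of_toWeakSpace {E : Type*} [NormedAddCommGroup E] [NormedSpace ℝ E]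
    {s : Set E} (hs : IsCompact (toWeakSpace ℝ E '' s)) : IsClosed s := by
  rw [← (toWeakSpace ℝ E).injective.preimage_image s]
  exact hs.isClosed.preimage (toWeakSpaceCLM ℝ E).continuous

theorem unique_fixed_point_of_uniformly_asymptotic_local_contraction_general
    {U : Type*} [NormedAddCommGroup U] [NormedSpace ℝ U] [CompleteSpace U]
    (Q : Set U) (hQne : Q.Nonempty) (hQconv : Convex ℝ Q)
    (hQwc : IsCompact (toWeakSpace ℝ U '' Q))
    (T : U → U) (hT : Set.MapsTo T Q Q)
    (r : ℝ) (hr : 0 < r)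
    (β : ℝ) (hβ1 : β < 1)
    (βseq : ℕ → ℝ) (hβpos : ∀ n, 0 < βseq n)
    (hβlim : Tendsto βseq atTop (nhds β))
    (hTloc : ∀ p ∈ Q, ∀ q ∈ Q, ‖p - q‖ < r →
      ∀ n : ℕ, 1 ≤ n → ‖T^[n] p - T^[n] q‖ ≤ βseq n * ‖p - q‖) :
    ∃! w, w ∈ Q ∧ T w = w := by
  obtain ⟨k, hk1, hkβ⟩ :=
    ((eventually_ge_atTop 1).and (hβlim.eventually (eventually_lt_nhds hβ1))).exists
  have hlip : LipschitzOnWith ⟨βseq k, (hβpos k).le⟩ T^[k] Q :=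
    hQconv.lipschitzOnWith_of_dist_lt hr fun p hp q hq hpq => by
      rw [dist_eq_norm] at hpq
      rw [dist_eq_norm, dist_eq_norm]
      exact hTloc p hp q hq hpq k hk1
  exact existsUnique_fixedPt_of_iterate hT <|
    hlip.existsUnique_fixedPt_of_lt_one hQwc.isClosed_of_toWeakSpace.isComplete hQne
      (hT.iterate k) hkβ

theorem unique_fixed_point_of_uniformly_asymptotic_local_contraction
    {U : Type*} [NormedAddCommGroup U] [NormedSpace ℝ U] [CompleteSpace U]
    (Q : Set U) (hQne : Q.Nonempty) (hQconv : Convex ℝ Q)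
    (hQwc : IsCompact (toWeakSpace ℝ U '' Q))
    (T : U → U) (hT : Set.MapsTo T Q Q)
    (r : ℝ) (hr : 0 < r)
    (β : ℝ) (hβ0 : 0 ≤ β) (hβ1 : β < 1)
    (βseq : ℕ → ℝ) (hβpos : ∀ n, 0 < βseq n)
    (hβlim : Tendsto βseq atTop (nhds β))
    (hTloc : ∀ p ∈ Q, ∀ q ∈ Q, ‖p - q‖ < r →
      ∀ n : ℕ, 1 ≤ n → ‖T^[n] p - T^[n] q‖ ≤ βseq n * ‖p - q‖)
    (q₀ : U) (hq₀ : q₀ ∈ Q)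
    (hrad : asymptoticRadius Q (fun n => T^[n] q₀) < r) :
    ∃! w, w ∈ Q ∧ T w = w :=
  unique_fixed_point_of_uniformly_asymptotic_local_contraction_general Q hQne hQconv hQwc T hT r hr
    β hβ1 βseq hβpos hβlim hTloc
end

section
/- Let Q be a nonempty weakly compact convex subset of a Banach space U and let T : Q → Q be a uniformly asymptotic local contraction with radius r > 0, coefficients (β_n) and limit β ∈ [0, 1). If q₀ ∈ Q is such that the asymptotic radius of (Tⁿq₀) relative to Q is strictly less than r, then the sequence (Tⁿq₀) converges in norm to a fixed point w of T; moreover limsup_{n→∞} ‖Tⁿq₀ − w‖ = 0. -/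
open Filter

/-!
Weakly compact sets are norm bounded (uniform boundedness) and norm closed. Boundedness makes the
limsups in the asymptotic radius genuine, so we can pick `y ∈ Q` whose asymptotic distance to the
orbit `xₙ = Tⁿq₀` is below `r`, and `K ≥ 1` with `c := β_K < 1`. From some index on, `xₙ` stays
within `r` of `y`, so the local contraction of `S := T^K` can be applied repeatedly:
`dist (x_{n + jK}) (Sʲ y) ≤ cʲ r`. Hence the tail of the orbit lies in balls of radii `cʲ r → 0`,
the orbit is Cauchy, and its limit `w` lies in `Q`. Since `T` is locally Lipschitz on `Q`, `w` is
fixed.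
-/

open Function Set Bornology Topology

theorem Bornology.IsBounded.of_isCompact_toWeakSpace_image {𝕜 X : Type*} [RCLike 𝕜]
    [NormedAddCommGroup X] [NormedSpace 𝕜 X] {s : Set X}
    (hs : IsCompact (toWeakSpace 𝕜 X '' s)) : IsBounded s := by
  have hcpt := hs.image (NormedSpace.inclusionInDoubleDualWeak 𝕜 X).continuous
  have hbdd : IsBounded (NormedSpace.inclusionInDoubleDualLi 𝕜 '' s) := by
    rw [image_image] at hcpt
    -- uniform boundedness principle in the bidual
    exact WeakDual.isBounded_iff_isVonNBounded.2 (hcpt.isVonNBounded (𝕜 := 𝕜))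
  exact ((NormedSpace.inclusionInDoubleDualLi 𝕜).isometry.antilipschitz.isBounded_preimage
    hbdd).subset (subset_preimage_image _ _)

theorem IsClosed.of_isCompact_toWeakSpace_image {𝕜 X : Type*} [RCLike 𝕜]
    [NormedAddCommGroup X] [NormedSpace 𝕜 X] {s : Set X}
    (hs : IsCompact (toWeakSpace 𝕜 X '' s)) : IsClosed s := by
  have := hs.isClosed.preimage (toWeakSpaceCLM 𝕜 X).continuous
  rwa [funext (toWeakSpaceCLM_eq_toWeakSpace 𝕜 X), (toWeakSpace 𝕜 X).injective.preimage_image]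
    at this

theorem exists_mem_eventually_dist_lt_of_asymptoticRadius_lt {U : Type*}
    [NormedAddCommGroup U] {Q : Set U} {x : ℕ → U} {r : ℝ} (hQ : Q.Nonempty)
    (hx : IsBounded (range x)) (hrad : asymptoticRadius Q x < r) :
    ∃ y ∈ Q, ∀ᶠ n in atTop, dist (x n) y < r := by
  obtain ⟨_, ⟨y, hy, rfl⟩, hlt⟩ := exists_lt_of_csInf_lt (hQ.image _) hrad
  obtain ⟨C, hC⟩ := hx.subset_closedBall y
  have hbdd : IsBoundedUnder (· ≤ ·) atTop fun n => ‖x n - y‖ :=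
    isBoundedUnder_of ⟨C, fun n => by simpa [dist_eq_norm] using hC (mem_range_self n)⟩
  exact ⟨y, hy, by simpa only [dist_eq_norm] using eventually_lt_of_limsup_lt hlt hbdd⟩

section Metric

variable {α β : Type*} [PseudoMetricSpace α]

theorem continuousWithinAt_of_dist_le_mul [PseudoMetricSpace β] {f : α → β} {s : Set α}
    {a : α} {C r : ℝ} (hr : 0 < r)
    (hf : ∀ x ∈ s, dist x a < r → dist (f x) (f a) ≤ C * dist x a) :
    ContinuousWithinAt f s a := by
  have hlim : Tendsto (fun x => C * dist x a) (𝓝 a) (𝓝 (C * dist a a)) :=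
    (tendsto_id.dist tendsto_const_nhds).const_mul C
  rw [dist_self, mul_zero] at hlim
  rw [ContinuousWithinAt, tendsto_iff_dist_tendsto_zero]
  refine squeeze_zero' (.of_forall fun _ => dist_nonneg) ?_ (hlim.mono_left nhdsWithin_le_nhds)
  filter_upwards [self_mem_nhdsWithin, mem_nhdsWithin_of_mem_nhds (Metric.ball_mem_nhds a hr)]
    with x hxs hxa using hf x hxs hxa

theorem cauchySeq_of_eventually_dist_le {u z : ℕ → α} {b : ℕ → ℝ}
    (hb : Tendsto b atTop (𝓝 0)) (h : ∀ j, ∀ᶠ n in atTop, dist (u n) (z j) ≤ b j) :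
    CauchySeq u := by
  rw [Metric.cauchySeq_iff]
  intro ε hε
  obtain ⟨j, hj⟩ := (hb.eventually (gt_mem_nhds (half_pos hε))).exists
  obtain ⟨N, hN⟩ := eventually_atTop.1 (h j)
  exact ⟨N, fun m hm n hn => (dist_triangle_right _ _ (z j)).trans_lt
    (by linarith [hN m hm, hN n hn])⟩

variable {T : α → α} {s : Set α} {c r : ℝ}

theorem isFixedPt_of_tendsto_iterate_of_continuousWithinAt [T2Space α] {x y : α}
    (hy : Tendsto (fun n => T^[n] x) atTop (𝓝 y)) (hs : ∀ᶠ n in atTop, T^[n] x ∈ s)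
    (hT : ContinuousWithinAt T s y) : IsFixedPt T y := by
  refine tendsto_nhds_unique ((tendsto_add_atTop_iff_nat 1).1 ?_) hy
  simp only [iterate_succ']
  exact hT.tendsto.comp (tendsto_nhdsWithin_iff.2 ⟨hy, hs⟩)

theorem dist_iterate_le_pow_mul_dist (hT : MapsTo T s s) (hc0 : 0 ≤ c) (hc1 : c ≤ 1)
    (hcontr : ∀ p ∈ s, ∀ q ∈ s, dist p q < r → dist (T p) (T q) ≤ c * dist p q)
    {p q : α} (hp : p ∈ s) (hq : q ∈ s) (hpq : dist p q < r) (j : ℕ) :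
    dist (T^[j] p) (T^[j] q) ≤ c ^ j * dist p q := by
  induction j with
  | zero => simp
  | succ j ih =>
    have hlt : dist (T^[j] p) (T^[j] q) < r :=
      ih.trans_lt ((mul_le_of_le_one_left dist_nonneg (pow_le_one₀ hc0 hc1)).trans_lt hpq)
    rw [iterate_succ_apply', iterate_succ_apply']
    calc dist (T (T^[j] p)) (T (T^[j] q)) ≤ c * dist (T^[j] p) (T^[j] q) :=
          hcontr _ (hT.iterate j hp) _ (hT.iterate j hq) hlt
      _ ≤ c * (c ^ j * dist p q) := by gcongr
      _ = c ^ (j + 1) * dist p q := by ring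

section IterateContraction

variable {K : ℕ} {x₀ y : α} (hT : MapsTo T s s) (hc0 : 0 ≤ c)
  (hK : ∀ p ∈ s, ∀ q ∈ s, dist p q < r → dist (T^[K] p) (T^[K] q) ≤ c * dist p q)
  (hx₀ : x₀ ∈ s) (hy : y ∈ s) (hnear : ∀ᶠ n in atTop, dist (T^[n] x₀) y < r)
include hT hc0 hK hx₀ hy hnear

theorem eventually_dist_iterate_le_pow_mul (hc1 : c ≤ 1) (j : ℕ) :
    ∀ᶠ n in atTop, dist (T^[n] x₀) ((T^[K])^[j] y) ≤ c ^ j * r := by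
  obtain ⟨N, hN⟩ := eventually_atTop.1 hnear
  refine eventually_atTop.2 ⟨N + j * K, fun n hn => ?_⟩
  obtain ⟨m, rfl⟩ : ∃ m, n = j * K + m := ⟨n - j * K, by omega⟩
  have hm : dist (T^[m] x₀) y < r := hN m (by omega)
  rw [iterate_add_apply, mul_comm, iterate_mul]
  calc dist ((T^[K])^[j] (T^[m] x₀)) ((T^[K])^[j] y) ≤ c ^ j * dist (T^[m] x₀) y :=
        dist_iterate_le_pow_mul_dist (hT.iterate K) hc0 hc1 hK (hT.iterate m hx₀) hy hm j
    _ ≤ c ^ j * r := by gcongr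

theorem cauchySeq_iterate_of_iterate_contracting (hc1 : c < 1) :
    CauchySeq fun n => T^[n] x₀ :=
  cauchySeq_of_eventually_dist_le
    (by simpa using (tendsto_pow_atTop_nhds_zero_of_lt_one hc0 hc1).mul_const r)
    (eventually_dist_iterate_le_pow_mul hT hc0 hK hx₀ hy hnear hc1.le)

end IterateContraction

end Metric

theorem iterates_converge_to_fixed_point_of_uniformly_asymptotic_local_contraction_general
    {U : Type*} [NormedAddCommGroup U] [NormedSpace ℝ U] [CompleteSpace U]
    (Q : Set U)
    (hQwc : IsCompact (toWeakSpace ℝ U '' Q))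
    (T : U → U) (hT : Set.MapsTo T Q Q)
    (r : ℝ) (hr : 0 < r)
    (β : ℝ) (hβ1 : β < 1)
    (βseq : ℕ → ℝ) (hβpos : ∀ n, 0 < βseq n)
    (hβlim : Tendsto βseq atTop (nhds β))
    (hTloc : ∀ p ∈ Q, ∀ q ∈ Q, ‖p - q‖ < r →
      ∀ n : ℕ, 1 ≤ n → ‖T^[n] p - T^[n] q‖ ≤ βseq n * ‖p - q‖)
    (q₀ : U) (hq₀ : q₀ ∈ Q)
    (hrad : asymptoticRadius Q (fun n => T^[n] q₀) < r) :
    ∃ w ∈ Q, T w = w ∧ Tendsto (fun n => T^[n] q₀) atTop (nhds w) ∧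
      limsup (fun n => ‖T^[n] q₀ - w‖) atTop = 0 := by
  simp only [← dist_eq_norm] at hTloc
  have horbit : ∀ n, T^[n] q₀ ∈ Q := fun n => hT.iterate n hq₀
  obtain ⟨y, hyQ, hnear⟩ := exists_mem_eventually_dist_lt_of_asymptoticRadius_lt ⟨q₀, hq₀⟩
    ((IsBounded.of_isCompact_toWeakSpace_image hQwc).subset (range_subset_iff.2 horbit)) hrad
  obtain ⟨K, hβK, hK⟩ :=
    ((hβlim.eventually (gt_mem_nhds hβ1)).and (eventually_ge_atTop 1)).exists
  obtain ⟨w, hw⟩ := cauchySeq_tendsto_of_complete <|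
    cauchySeq_iterate_of_iterate_contracting hT (hβpos K).le
      (fun p hp q hq hpq => hTloc p hp q hq hpq K hK) hq₀ hyQ hnear hβK
  have hwQ : w ∈ Q :=
    (IsClosed.of_isCompact_toWeakSpace_image hQwc).mem_of_tendsto hw (.of_forall horbit)
  have hTw : T w = w := isFixedPt_of_tendsto_iterate_of_continuousWithinAt hw
    (.of_forall horbit) (continuousWithinAt_of_dist_le_mul hr
      fun p hp hpw => by simpa using hTloc p hp w hwQ hpw 1 le_rfl)
  exact ⟨w, hwQ, hTw, hw, (tendsto_iff_norm_sub_tendsto_zero.1 hw).limsup_eq⟩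

theorem iterates_converge_to_fixed_point_of_uniformly_asymptotic_local_contraction
    {U : Type*} [NormedAddCommGroup U] [NormedSpace ℝ U] [CompleteSpace U]
    (Q : Set U) (hQne : Q.Nonempty) (hQconv : Convex ℝ Q)
    (hQwc : IsCompact (toWeakSpace ℝ U '' Q))
    (T : U → U) (hT : Set.MapsTo T Q Q)
    (r : ℝ) (hr : 0 < r)
    (β : ℝ) (hβ0 : 0 ≤ β) (hβ1 : β < 1)
    (βseq : ℕ → ℝ) (hβpos : ∀ n, 0 < βseq n)
    (hβlim : Tendsto βseq atTop (nhds β))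
    (hTloc : ∀ p ∈ Q, ∀ q ∈ Q, ‖p - q‖ < r →
      ∀ n : ℕ, 1 ≤ n → ‖T^[n] p - T^[n] q‖ ≤ βseq n * ‖p - q‖)
    (q₀ : U) (hq₀ : q₀ ∈ Q)
    (hrad : asymptoticRadius Q (fun n => T^[n] q₀) < r) :
    ∃ w ∈ Q, T w = w ∧ Tendsto (fun n => T^[n] q₀) atTop (nhds w) ∧
      limsup (fun n => ‖T^[n] q₀ - w‖) atTop = 0 :=
  iterates_converge_to_fixed_point_of_uniformly_asymptotic_local_contraction_general Q hQwc T hT r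
    hr β hβ1 βseq hβpos hβlim hTloc q₀ hq₀ hrad
end

section
/- Let Q be a nonempty convex subset of a Banach space U and let T : Q → Q be a uniformly asymptotic local contraction with radius r > 0, coefficients (β_n) and limit β ∈ [0, 1). Then T has at most one fixed point: if u, v ∈ Q satisfy Tu = u and Tv = v, then u = v. -/
/-!
Cutting the segment `[u, v] ⊆ Q` into pieces shorter than `r` and telescoping shows that the
local estimate `‖Tⁿp − Tⁿq‖ ≤ βₙ ‖p − q‖` holds for all `p, q ∈ Q`. Since `βₙ → β < 1`, some
`Tⁿ` with `n ≥ 1` is then a strict contraction on `Q`, and two fixed points `u, v` of `T` give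
`‖u − v‖ = ‖Tⁿu − Tⁿv‖ ≤ βₙ ‖u − v‖`, so `u = v`.
-/

open Filter AffineMap

theorem Convex.dist_le_mul_of_forall_dist_lt {E F : Type*}
    [SeminormedAddCommGroup E] [NormedSpace ℝ E] [PseudoMetricSpace F]
    {s : Set E} (hs : Convex ℝ s) {f : E → F} {c r : ℝ} (hr : 0 < r)
    (hf : ∀ x ∈ s, ∀ y ∈ s, dist x y < r → dist (f x) (f y) ≤ c * dist x y)
    {x y : E} (hx : x ∈ s) (hy : y ∈ s) :
    dist (f x) (f y) ≤ c * dist x y := by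
  obtain ⟨N, hN⟩ := exists_nat_gt (dist x y / r)
  have hN0 : (0 : ℝ) < N := (div_nonneg dist_nonneg hr.le).trans_lt hN
  set w : ℕ → E := fun i ↦ lineMap x y ((i : ℝ) / N)
  have hw_mem {i : ℕ} (hi : i ≤ N) : w i ∈ s :=
    hs.lineMap_mem hx hy ⟨by positivity, div_le_one_of_le₀ (by exact_mod_cast hi) hN0.le⟩
  have hw_step (i : ℕ) : dist (w i) (w (i + 1)) = dist x y / N := by
    simp only [w, dist_lineMap_lineMap, Real.dist_eq, Nat.cast_succ, add_div, sub_add_cancel_left,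
      abs_neg, abs_of_pos (one_div_pos.mpr hN0)]
    ring
  have hw_step_lt (i : ℕ) : dist (w i) (w (i + 1)) < r := by
    rw [hw_step, div_lt_iff₀ hN0]
    rwa [div_lt_iff₀ hr, mul_comm] at hN
  calc dist (f x) (f y) = dist (f (w 0)) (f (w N)) := by simp [w, hN0.ne']
    _ ≤ ∑ _i ∈ Finset.range N, c * (dist x y / N) :=
        dist_le_range_sum_of_dist_le N fun {i} hi ↦
          hw_step i ▸ hf _ (hw_mem hi.le) _ (hw_mem hi) (hw_step_lt i)
    _ = c * dist x y := by
        rw [Finset.sum_const, Finset.card_range, nsmul_eq_mul]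
        field_simp

theorem at_most_one_fixed_point_of_uniformly_asymptotic_local_contraction_general
    {U : Type*} [NormedAddCommGroup U] [NormedSpace ℝ U]
    (Q : Set U) (hQconv : Convex ℝ Q)
    (T : U → U)
    (r : ℝ) (hr : 0 < r)
    (β : ℝ) (hβ1 : β < 1)
    (βseq : ℕ → ℝ)
    (hβlim : Tendsto βseq atTop (nhds β))
    (hTloc : ∀ p ∈ Q, ∀ q ∈ Q, ‖p - q‖ < r →
      ∀ n : ℕ, 1 ≤ n → ‖T^[n] p - T^[n] q‖ ≤ βseq n * ‖p - q‖)
    (u : U) (hu : u ∈ Q) (hufix : T u = u)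
    (v : U) (hv : v ∈ Q) (hvfix : T v = v) :
    u = v := by
  obtain ⟨n, hβn, hn⟩ :=
    ((hβlim.eventually (gt_mem_nhds hβ1)).and (eventually_ge_atTop 1)).exists
  have hglobal : dist (T^[n] u) (T^[n] v) ≤ βseq n * dist u v := by
    refine hQconv.dist_le_mul_of_forall_dist_lt hr (fun p hp q hq hpq ↦ ?_) hu hv
    simpa only [dist_eq_norm] using hTloc p hp q hq (by rwa [← dist_eq_norm]) n hn
  rw [Function.iterate_fixed hufix, Function.iterate_fixed hvfix] at hglobal
  exact dist_le_zero.mp (by nlinarith [dist_nonneg (x := u) (y := v)])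

theorem at_most_one_fixed_point_of_uniformly_asymptotic_local_contraction
    {U : Type*} [NormedAddCommGroup U] [NormedSpace ℝ U] [CompleteSpace U]
    (Q : Set U) (hQne : Q.Nonempty) (hQconv : Convex ℝ Q)
    (T : U → U) (hT : Set.MapsTo T Q Q)
    (r : ℝ) (hr : 0 < r)
    (β : ℝ) (hβ0 : 0 ≤ β) (hβ1 : β < 1)
    (βseq : ℕ → ℝ) (hβpos : ∀ n, 0 < βseq n)
    (hβlim : Tendsto βseq atTop (nhds β))
    (hTloc : ∀ p ∈ Q, ∀ q ∈ Q, ‖p - q‖ < r →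
      ∀ n : ℕ, 1 ≤ n → ‖T^[n] p - T^[n] q‖ ≤ βseq n * ‖p - q‖)
    (u : U) (hu : u ∈ Q) (hufix : T u = u)
    (v : U) (hv : v ∈ Q) (hvfix : T v = v) :
    u = v :=
  at_most_one_fixed_point_of_uniformly_asymptotic_local_contraction_general Q hQconv T r hr β hβ1
    βseq hβlim hTloc u hu hufix v hv hvfix
end
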